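/- Let A < B be reals, τ(s) = √((s−A)(B−s)) for s ∈ [A,B], and b(z) = √(z−A)·√(z−B) for z ∉ [A,B] (principal branches as above). Then for every z in the upper half plane, ∫_A^B τ(s)/(s−z) ds = π·((A+B)/2 − z + b(z)). -/

import Mathlib

/-!
Substituting `s = (A + B)/2 + r cos θ` with `r = (B - A)/2` turns the integral into
`r ∫₀^π sin²θ / (cos θ - w) dθ` with `w = (z - (A + B)/2)/r` in the upper half plane. Writing
`sin²θ = (1 - w²) - (cos θ - w)(cos θ + w)` leaves `∫₀^π dθ / (cos θ - w)`, which is half the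
integral over a full period. Writing `w = (u + u⁻¹)/2` with `|u| > 1`, that full-period integral
becomes a contour integral over the unit circle of a rational function whose only pole inside
the circle is `u⁻¹`, so it equals `-2π/β` with `β = (u - u⁻¹)/2`, a square root of `w² - 1`.
The principal branches make `b(z)/r` that root, because `Im b(z) > 0`.
-/

open MeasureTheory Real

theorem cos_sub_joukowski (θ : ℝ) {u : ℂ} (hu : u ≠ 0) :
    (cos θ : ℂ) - (u + u⁻¹) / 2 =
      (circleMap 0 1 θ - u) * (circleMap 0 1 θ - u⁻¹) / (2 * circleMap 0 1 θ) := by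
  have hζ : circleMap 0 1 θ ≠ 0 := circleMap_ne_center one_ne_zero
  rw [circleMap_zero, Complex.ofReal_one, one_mul] at hζ ⊢
  rw [Complex.ofReal_cos, Complex.cos, neg_mul, Complex.exp_neg]
  field_simp
  ring

theorem integral_inv_cos_sub_joukowski {u : ℂ} (hu : 1 < ‖u‖) :
    ∫ θ in (0 : ℝ)..2 * π, ((cos θ : ℂ) - (u + u⁻¹) / 2)⁻¹ = -4 * π / (u - u⁻¹) := by
  have hu0 : u ≠ 0 := norm_pos_iff.1 (one_pos.trans hu)
  have hu_inv : ‖u⁻¹‖ < 1 := by rw [norm_inv]; exact inv_lt_one_of_one_lt₀ hu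
  have hsub : u - u⁻¹ ≠ 0 := fun h => by
    rw [sub_eq_zero.1 h] at hu; exact hu.not_gt hu_inv
  have hζu : ∀ θ, circleMap 0 1 θ - u ≠ 0 := fun θ h => by
    have := norm_circleMap_zero 1 θ
    rw [sub_eq_zero.1 h] at this; simp [this] at hu
  have hζu' : ∀ θ, circleMap 0 1 θ - u⁻¹ ≠ 0 := fun θ h => by
    have := norm_circleMap_zero 1 θ
    rw [sub_eq_zero.1 h] at this; simp [this] at hu_inv
  -- partial fractions in `ζ = e^{iθ}`, with `dθ = dζ / (iζ)`
  have hpartial : ∀ θ : ℝ, ((cos θ : ℂ) - (u + u⁻¹) / 2)⁻¹ =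
      2 / (Complex.I * (u - u⁻¹)) * (deriv (circleMap 0 1) θ •
        ((circleMap 0 1 θ - u)⁻¹ - (circleMap 0 1 θ - u⁻¹)⁻¹)) := by
    intro θ
    have hζ : circleMap 0 1 θ ≠ 0 := circleMap_ne_center one_ne_zero
    rw [cos_sub_joukowski θ hu0, deriv_circleMap, smul_eq_mul]
    have := hζu θ
    have := hζu' θ
    generalize circleMap 0 1 θ = ζ at *
    generalize u⁻¹ = v at *
    field_simp
    ring
  have houter : ∮ ζ in C(0, 1), (ζ - u)⁻¹ = 0 := by
    refine DiffContOnCl.circleIntegral_eq_zero zero_le_one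
      (DifferentiableOn.diffContOnCl_ball (U := {u}ᶜ) ?_ ?_)
    · exact (differentiableOn_id.sub_const u).inv fun ζ hζ => sub_ne_zero.2 hζ
    · intro ζ hζ hζu
      rw [Metric.mem_closedBall, dist_zero_right, hζu] at hζ
      exact hζ.not_gt hu
  have hinner : ∮ ζ in C(0, 1), (ζ - u⁻¹)⁻¹ = 2 * π * Complex.I :=
    circleIntegral.integral_sub_inv_of_mem_ball (by simpa using hu_inv)
  calc ∫ θ in (0 : ℝ)..2 * π, ((cos θ : ℂ) - (u + u⁻¹) / 2)⁻¹
      = 2 / (Complex.I * (u - u⁻¹)) * ∮ ζ in C(0, 1), ((ζ - u)⁻¹ - (ζ - u⁻¹)⁻¹) := by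
        simp_rw [hpartial, intervalIntegral.integral_const_mul]; rfl
    _ = 2 / (Complex.I * (u - u⁻¹)) * (0 - 2 * π * Complex.I) := by
        rw [circleIntegral.integral_sub, houter, hinner]
        all_goals simp [hu.ne']
    _ = -4 * π / (u - u⁻¹) := by field_simp; ring

theorem integral_comp_cos_zero_two_pi {E : Type*} [NormedAddCommGroup E] [NormedSpace ℝ E]
    {g : ℝ → E} (hg : Continuous g) :
    ∫ θ in (0 : ℝ)..2 * π, g (cos θ) = (2 : ℝ) • ∫ θ in (0 : ℝ)..π, g (cos θ) := by
  have hint : ∀ a b : ℝ, IntervalIntegrable (fun θ => g (cos θ)) volume a b :=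
    fun a b => (hg.comp continuous_cos).intervalIntegrable a b
  have hreflect : ∫ θ in π..2 * π, g (cos θ) = ∫ θ in (0 : ℝ)..π, g (cos θ) := by
    have h := intervalIntegral.integral_comp_sub_left (fun θ => g (cos θ)) (2 * π)
      (a := 0) (b := π)
    simp only [Real.cos_two_pi_sub] at h
    rw [two_mul, add_sub_cancel_right, sub_zero, ← two_mul] at h
    exact h.symm
  rw [← intervalIntegral.integral_add_adjacent_intervals (hint 0 π) (hint π (2 * π)),
    hreflect, two_smul]

theorem one_lt_norm_add_of_sq_eq_sq_sub_one {w β : ℂ} (hw : 0 < w.im) (hβ : 0 < β.im)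
    (hβw : β ^ 2 = w ^ 2 - 1) : 1 < ‖w + β‖ := by
  -- `w - β = (w + β)⁻¹`, and comparing imaginary parts pins down `‖w + β‖²`
  have hinv : (w + β)⁻¹ = w - β :=
    inv_eq_of_mul_eq_one_right (by linear_combination -hβw)
  have hne : w + β ≠ 0 := fun h =>
    (add_pos hw hβ).ne' (by simpa using congrArg Complex.im h)
  have him := congrArg Complex.im hinv
  rw [Complex.inv_im, Complex.add_im, Complex.sub_im,
    div_eq_iff (Complex.normSq_pos.2 hne).ne'] at him
  have hN : 1 < Complex.normSq (w + β) := by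
    by_contra! h
    nlinarith [Complex.normSq_nonneg (w + β)]
  rw [Complex.normSq_eq_norm_sq] at hN
  nlinarith [norm_nonneg (w + β)]

theorem cpow_inv_two_re_pos_im_pos {x : ℂ} (hx : 0 < x.im) :
    0 < (x ^ (2⁻¹ : ℂ)).re ∧ 0 < (x ^ (2⁻¹ : ℂ)).im := by
  have hre := Complex.abs_re_lt_norm.2 hx.ne'
  rw [Complex.cpow_inv_two_re, Complex.cpow_inv_two_im_eq_sqrt hx.le]
  constructor <;> apply Real.sqrt_pos.2 <;> linarith [neg_abs_le x.re, le_abs_self x.re]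

theorem integral_sin_sq_div_cos_sub {w β : ℂ} (hw : 0 < w.im) (hβ : 0 < β.im)
    (hβw : β ^ 2 = w ^ 2 - 1) :
    ∫ θ in (0 : ℝ)..π, (sin θ : ℂ) ^ 2 / ((cos θ : ℂ) - w) = π * (β - w) := by
  have hβ0 : β ≠ 0 := fun h => by simp [h] at hβ
  have hcos : ∀ x : ℝ, (x : ℂ) - w ≠ 0 := fun x h =>
    hw.ne' (by simpa using congrArg Complex.im h)
  have hcont : Continuous fun x : ℝ => ((x : ℂ) - w)⁻¹ :=
    (Complex.continuous_ofReal.sub continuous_const).inv₀ hcos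
  have hinv : (w + β)⁻¹ = w - β :=
    inv_eq_of_mul_eq_one_right (by linear_combination -hβw)
  have hhalf : ∫ θ in (0 : ℝ)..π, ((cos θ : ℂ) - w)⁻¹ = -π / β := by
    have h := integral_inv_cos_sub_joukowski (one_lt_norm_add_of_sq_eq_sq_sub_one hw hβ hβw)
    rw [hinv, show (w + β + (w - β)) / 2 = w by ring, show w + β - (w - β) = 2 * β by ring,
      integral_comp_cos_zero_two_pi hcont] at h
    rw [Complex.real_smul, Complex.ofReal_ofNat, eq_div_iff (by simpa using hβ0)] at h
    rw [eq_div_iff hβ0]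
    linear_combination h / 4
  have hsplit : ∀ θ : ℝ, (sin θ : ℂ) ^ 2 / ((cos θ : ℂ) - w) =
      (1 - w ^ 2) * ((cos θ : ℂ) - w)⁻¹ - ((cos θ : ℂ) + w) := by
    intro θ
    have hsc : (sin θ : ℂ) ^ 2 = 1 - (cos θ : ℂ) ^ 2 := by
      rw [eq_sub_iff_add_eq]; exact_mod_cast Real.sin_sq_add_cos_sq θ
    rw [div_eq_mul_inv, hsc]
    linear_combination (-((cos θ : ℂ) + w)) * mul_inv_cancel₀ (hcos (cos θ))
  simp_rw [hsplit]
  rw [intervalIntegral.integral_sub, intervalIntegral.integral_const_mul, hhalf,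
    intervalIntegral.integral_add, intervalIntegral.integral_ofReal, integral_cos,
    intervalIntegral.integral_const]
  · simp only [Real.sin_pi, Real.sin_zero, sub_zero, Complex.ofReal_zero, Complex.real_smul]
    field_simp
    linear_combination (-π : ℂ) * hβw
  all_goals apply Continuous.intervalIntegrable
  all_goals first | fun_prop | exact continuous_const.mul (hcont.comp continuous_cos)

theorem integral_sqrt_mul_smul_eq {E : Type*} [NormedAddCommGroup E] [NormedSpace ℝ E]
    {A B : ℝ} (hAB : A ≤ B) (g : ℝ → E) :
    ∫ s in A..B, √((s - A) * (B - s)) • g s =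
      ((B - A) / 2) ^ 2 • ∫ θ in (0 : ℝ)..π,
        sin θ ^ 2 • g ((A + B) / 2 + (B - A) / 2 * cos θ) := by
  set r := (B - A) / 2 with hr_def
  set c := (A + B) / 2 with hc_def
  have hr : 0 ≤ r := by linarith
  have hsubst := intervalIntegral.integral_deriv_smul_comp_of_deriv_nonpos
    (a := π) (b := 0) (f := fun θ => c + r * cos θ) (f' := fun θ => -(r * sin θ))
    (g := fun s => √((s - A) * (B - s)) • g s) (by fun_prop)
    (fun θ _ => by simpa using ((Real.hasDerivAt_cos θ).const_mul r).const_add c)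
    (fun θ hθ => by
      rw [min_eq_right pi_pos.le, max_eq_left pi_pos.le] at hθ
      have := Real.sin_nonneg_of_nonneg_of_le_pi hθ.1.le hθ.2.le
      simp only [neg_nonpos]; positivity)
  rw [Real.cos_pi, Real.cos_zero, show c + r * -1 = A by linarith,
    show c + r * 1 = B by linarith, intervalIntegral.integral_symm] at hsubst
  rw [← hsubst, ← intervalIntegral.integral_smul, ← intervalIntegral.integral_neg]
  refine intervalIntegral.integral_congr fun θ hθ => ?_
  rw [Set.uIcc_of_le pi_pos.le] at hθ
  have hsin := Real.sin_nonneg_of_nonneg_of_le_pi hθ.1 hθ.2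
  have hsqrt : √((c + r * cos θ - A) * (B - (c + r * cos θ))) = r * sin θ := by
    rw [← Real.sqrt_sq (by positivity : 0 ≤ r * sin θ)]
    congr 1
    linear_combination (-r ^ 2) * Real.sin_sq_add_cos_sq θ
  simp only [Function.comp_apply, hsqrt, smul_smul, ← neg_smul]
  congr 1
  ring

theorem im_cpow_half_mul_cpow_half_pos {x y : ℂ} (hx : 0 < x.im) (hy : 0 < y.im) :
    0 < (x ^ ((1 : ℂ) / 2) * y ^ ((1 : ℂ) / 2)).im := by
  obtain ⟨hx_re, hx_im⟩ := cpow_inv_two_re_pos_im_pos hx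
  obtain ⟨hy_re, hy_im⟩ := cpow_inv_two_re_pos_im_pos hy
  rw [one_div, Complex.mul_im]
  positivity

theorem integral_sqrt_div_sub_eq {A B : ℝ} (hAB : A < B) (z : ℂ) :
    ∫ s in A..B, (√((s - A) * (B - s)) : ℂ) / ((s : ℂ) - z) =
      ((B - A) / 2 : ℝ) * ∫ θ in (0 : ℝ)..π,
        (sin θ : ℂ) ^ 2 / ((cos θ : ℂ) - (z - ((A + B) / 2 : ℝ)) / ((B - A) / 2 : ℝ)) := by
  set r : ℝ := (B - A) / 2 with hr_def
  set c : ℝ := (A + B) / 2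
  have hr0 : (r : ℂ) ≠ 0 := by norm_cast; linarith
  have hden : ∀ θ : ℝ, ((c + r * cos θ : ℝ) : ℂ) - z = r * ((cos θ : ℂ) - (z - c) / r) := by
    intro θ
    push_cast
    field_simp
    ring
  calc ∫ s in A..B, (√((s - A) * (B - s)) : ℂ) / ((s : ℂ) - z)
      = ∫ s in A..B, √((s - A) * (B - s)) • ((s : ℂ) - z)⁻¹ := by
        simp only [Complex.real_smul, div_eq_mul_inv]
    _ = r ^ 2 • ∫ θ in (0 : ℝ)..π, sin θ ^ 2 • (((c + r * cos θ : ℝ) : ℂ) - z)⁻¹ :=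
        integral_sqrt_mul_smul_eq hAB.le _
    _ = r * ∫ θ in (0 : ℝ)..π, (sin θ : ℂ) ^ 2 / ((cos θ : ℂ) - (z - c) / r) := by
        simp_rw [hden, mul_inv, Complex.real_smul, div_eq_mul_inv]
        push_cast
        simp_rw [← mul_assoc, mul_comm _ (r : ℂ)⁻¹, mul_assoc,
          intervalIntegral.integral_const_mul]
        field_simp

/-- Stieltjes transform of the semicircle-type density `τ(s) = √((s−A)(B−s))` on `[A,B]`:
for `Im z > 0`, `∫_A^B τ(s)/(s−z) ds = π·((A+B)/2 − z + b(z))` where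
`b(z) = √(z−A)·√(z−B)` (principal branches). -/
theorem stieltjes_semicircle (A B : ℝ) (hAB : A < B) (z : ℂ) (hz : 0 < z.im) :
    (∫ s in A..B, (Real.sqrt ((s - A) * (B - s)) : ℂ) / ((s : ℂ) - z)) =
      (Real.pi : ℂ) * (((A : ℂ) + (B : ℂ)) / 2 - z +
        (z - (A : ℂ)) ^ ((1 : ℂ) / 2) * (z - (B : ℂ)) ^ ((1 : ℂ) / 2)) := by
  set r : ℝ := (B - A) / 2 with hr_def
  set c : ℝ := (A + B) / 2 with hc_def
  set b : ℂ := (z - A) ^ ((1 : ℂ) / 2) * (z - B) ^ ((1 : ℂ) / 2) with hb_def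
  have hr : 0 < r := by linarith
  have hr0 : (r : ℂ) ≠ 0 := by exact_mod_cast hr.ne'
  have hw : 0 < ((z - c) / r).im := by
    rw [Complex.div_ofReal_im, Complex.sub_im, Complex.ofReal_im, sub_zero]
    positivity
  have hb : 0 < (b / r).im := by
    rw [Complex.div_ofReal_im]
    exact div_pos (im_cpow_half_mul_cpow_half_pos (by simpa using hz) (by simpa using hz)) hr
  have hbw : (b / r) ^ 2 = ((z - c) / r) ^ 2 - 1 := by
    rw [hb_def, one_div, div_pow, mul_pow, Complex.cpow_ofNat_inv_pow,
      Complex.cpow_ofNat_inv_pow]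
    field_simp
    push_cast [hr_def, hc_def]
    ring
  rw [integral_sqrt_div_sub_eq hAB, integral_sin_sq_div_cos_sub hw hb hbw]
  field_simp
  push_cast [hr_def, hc_def]
  ring
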